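/- For a density operator σ on H and a subspace V with tr(σΠ_V) ≤ 1 − ε for some ε ∈ (0,1), the normalized restriction σ_⊥ = Π_{V⊥} σ Π_{V⊥} / tr(Π_{V⊥} σ) satisfies ‖σ_⊥ − σ‖₁ ≤ 2(tr(Π_V σ) + √(tr(Π_V σ))·√(tr(Π_{V⊥} σ))) ≤ 2(1−ε+√(1−ε)). -/

import Mathlib

open Matrix
open scoped ComplexOrder

namespace QSVQDH

variable {d : ℕ}

/-- Schatten 1-norm (trace norm). -/
noncomputable def trNorm (A : Matrix (Fin d) (Fin d) ℂ) : ℝ :=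
  ((Matrix.posSemidef_conjTranspose_mul_self A).1.eigenvectorUnitary.1 *
    diagonal (((↑) : ℝ → ℂ) ∘ (Real.sqrt ·) ∘
      (Matrix.posSemidef_conjTranspose_mul_self A).1.eigenvalues) *
    (star (Matrix.posSemidef_conjTranspose_mul_self A).1.eigenvectorUnitary :
      Matrix (Fin d) (Fin d) ℂ)).trace.re

/-- Schatten 2-norm (Hilbert–Schmidt norm). -/
noncomputable def hsNorm (A : Matrix (Fin d) (Fin d) ℂ) : ℝ :=
  Real.sqrt ((Aᴴ * A).trace.re)

/-- Operator norm. -/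
noncomputable def opNorm (A : Matrix (Fin d) (Fin d) ℂ) : ℝ :=
  ‖Matrix.toEuclideanCLM (𝕜 := ℂ) A‖

/-- Density operator: positive semidefinite with unit trace. -/
def IsDensity (ρ : Matrix (Fin d) (Fin d) ℂ) : Prop := ρ.PosSemidef ∧ ρ.trace = 1

/-- POVM element: 0 ≤ M ≤ I. -/
def IsPOVMElem (M : Matrix (Fin d) (Fin d) ℂ) : Prop := M.PosSemidef ∧ (1 - M).PosSemidef

/-- A measurement class of binary effects: contains 0, consists of POVM elements,
is convex, and is closed under M ↦ I − M. -/
def IsMClass (Mset : Set (Matrix (Fin d) (Fin d) ℂ)) : Prop :=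
  0 ∈ Mset ∧ (∀ M ∈ Mset, IsPOVMElem M) ∧ Convex ℝ Mset ∧ (∀ M ∈ Mset, 1 - M ∈ Mset)

/-- The M-seminorm ‖Δ‖_M = sup_{M ∈ Mset} (2 tr(MΔ) − tr Δ). -/
noncomputable def Mnorm (Mset : Set (Matrix (Fin d) (Fin d) ℂ))
    (Δ : Matrix (Fin d) (Fin d) ℂ) : ℝ :=
  sSup ((fun M => 2 * (M * Δ).trace.re - Δ.trace.re) '' Mset)

/-- The ε-distinguishability ratio μ_{ρ,M}(ε). -/
noncomputable def mu (Mset : Set (Matrix (Fin d) (Fin d) ℂ))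
    (ρ : Matrix (Fin d) (Fin d) ℂ) (ε : ℝ) : ℝ :=
  (1 / (2 * ε)) *
    sInf ((fun σ => Mnorm Mset (ρ - σ)) '' {σ | IsDensity σ ∧ 2 * ε ≤ trNorm (ρ - σ)})

/-- The ε-visibility γ_{V,M}(ε), where the subspace V is given by its
orthogonal projector P. -/
noncomputable def gamma (Mset : Set (Matrix (Fin d) (Fin d) ℂ))
    (P : Matrix (Fin d) (Fin d) ℂ) (ε : ℝ) : ℝ :=
  (1 / ε) * sSup ((fun Ω =>
      sInf ((fun p : Matrix (Fin d) (Fin d) ℂ × Matrix (Fin d) (Fin d) ℂ =>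
          (Ω * (p.1 - p.2)).trace.re) ''
        {p | IsDensity p.1 ∧ P * p.1 = p.1 ∧ IsDensity p.2 ∧ (p.2 * P).trace.re ≤ 1 - ε}))
    '' Mset)

/-- The ε-visibility in its minimax (minimum) form. -/
noncomputable def gammaMin (Mset : Set (Matrix (Fin d) (Fin d) ℂ))
    (P : Matrix (Fin d) (Fin d) ℂ) (ε : ℝ) : ℝ :=
  sInf ((fun p : Matrix (Fin d) (Fin d) ℂ × Matrix (Fin d) (Fin d) ℂ =>
      (1 / (2 * ε)) * Mnorm Mset (p.1 - p.2)) ''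
    {p | IsDensity p.1 ∧ P * p.1 = p.1 ∧ IsDensity p.2 ∧ (p.2 * P).trace.re ≤ 1 - ε})

/-- μ_{ρ,M}(1), defined through perfectly distinguishable (orthogonal) counterparts. -/
noncomputable def muone (Mset : Set (Matrix (Fin d) (Fin d) ℂ))
    (ρ : Matrix (Fin d) (Fin d) ℂ) : ℝ :=
  (1 / 2) * sInf ((fun σ => Mnorm Mset (ρ - σ)) '' {σ | IsDensity σ ∧ (ρ * σ).trace = 0})

/-- The distinguishability ratio μ̂_{ρ,M}. -/
noncomputable def muhat (Mset : Set (Matrix (Fin d) (Fin d) ℂ))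
    (ρ : Matrix (Fin d) (Fin d) ℂ) : ℝ :=
  sInf ((fun σ => Mnorm Mset (ρ - σ) / trNorm (ρ - σ)) '' {σ | IsDensity σ ∧ σ ≠ ρ})

/-!
Write `Q = 1 - P`, `p = tr(Pσ)` and `q = tr(Qσ) = 1 - p`, so that
`q⁻¹ QσQ - σ = (q⁻¹ - 1) QσQ - QσP - PσQ - PσP`.
The trace norm of a Hermitian `Δ` is `re tr(UΔ)` for the unitary `U = sign Δ`, and for projections
`A`, `B`, writing `σ = √σ √σ`, Cauchy–Schwarz for the Hilbert–Schmidt pairing gives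
`|tr(U AσB)| ≤ ‖A√σ‖₂ ‖B√σ‖₂ = √tr(Aσ) √tr(Bσ)`.
The four blocks then contribute at most `(q⁻¹ - 1) q + 2 √p √q + p = 2 (p + √p √q)`.
-/

open scoped MatrixOrder

lemma trNorm_eq_trace_abs (A : Matrix (Fin d) (Fin d) ℂ) :
    trNorm A = (CFC.abs A).trace.re := by
  have h := Matrix.posSemidef_conjTranspose_mul_self A
  rw [CFC.abs, star_eq_conjTranspose, CFC.sqrt_eq_cfc, cfc_nnreal_eq_real _ _ h.nonneg,
    h.1.cfc_eq, IsHermitian.cfc, trNorm]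
  have hf : (RCLike.ofReal ∘ (fun x : ℝ => ((NNReal.sqrt x.toNNReal : NNReal) : ℝ)) ∘
      h.1.eigenvalues : Fin d → ℂ) = ((↑) : ℝ → ℂ) ∘ (Real.sqrt ·) ∘ h.1.eigenvalues := by
    funext i
    simp [Real.coe_sqrt, Real.coe_toNNReal', max_eq_left (h.eigenvalues_nonneg i)]
  rw [hf]
  rfl

lemma hsNorm_eq_norm_vec (A : Matrix (Fin d) (Fin d) ℂ) :
    hsNorm A = ‖WithLp.toLp 2 A.vec‖ := by
  rw [hsNorm, ← star_vec_dotProduct_vec, dotProduct_comm, ← EuclideanSpace.inner_toLp_toLp,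
    inner_self_eq_norm_sq_to_K]
  norm_cast
  exact Real.sqrt_sq (norm_nonneg _)

lemma norm_trace_conjTranspose_mul_le (A B : Matrix (Fin d) (Fin d) ℂ) :
    ‖(Aᴴ * B).trace‖ ≤ hsNorm A * hsNorm B := by
  rw [hsNorm_eq_norm_vec, hsNorm_eq_norm_vec, ← star_vec_dotProduct_vec, dotProduct_comm,
    ← EuclideanSpace.inner_toLp_toLp]
  exact norm_inner_le_norm _ _

lemma hsNorm_unitary_mul {U : Matrix (Fin d) (Fin d) ℂ} (hU : U ∈ unitary _)
    (B : Matrix (Fin d) (Fin d) ℂ) : hsNorm (U * B) = hsNorm B := by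
  have hUU : Uᴴ * U = 1 := Unitary.star_mul_self_of_mem hU
  rw [hsNorm, hsNorm, conjTranspose_mul, Matrix.mul_assoc, ← Matrix.mul_assoc Uᴴ, hUU,
    Matrix.one_mul]

lemma exists_unitary_trNorm_eq {Δ : Matrix (Fin d) (Fin d) ℂ} (hΔ : Δ.IsHermitian) :
    ∃ U ∈ unitary (Matrix (Fin d) (Fin d) ℂ), trNorm Δ = (U * Δ).trace.re := by
  let sgn : ℝ → ℝ := fun x => if 0 ≤ x then 1 else -1
  have hsgn : ContinuousOn sgn (spectrum ℝ Δ) := Δ.finite_real_spectrum.continuousOn _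
  refine ⟨cfc sgn Δ, ?_, ?_⟩
  · rw [cfc_unitary_iff sgn Δ]
    intro x _
    by_cases hx : 0 ≤ x <;> simp [sgn, hx]
  · have : cfc sgn Δ * Δ = cfc (‖·‖) Δ := by
      conv_lhs => rhs; rw [← cfc_id' ℝ Δ]
      rw [← cfc_mul sgn _ Δ]
      refine cfc_congr fun x _ => ?_
      by_cases hx : 0 ≤ x <;> simp [sgn, hx, abs_of_nonneg, abs_of_neg, not_le.mp]
    rw [trNorm_eq_trace_abs, CFC.abs_eq_cfc_norm Δ, this]

section Compression

variable {A σ : Matrix (Fin d) (Fin d) ℂ}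

lemma trace_conjTranspose_mul_self_proj_mul_sqrt (hA : IsStarProjection A) (hσ : 0 ≤ σ) :
    ((A * CFC.sqrt σ)ᴴ * (A * CFC.sqrt σ)).trace = (A * σ).trace := by
  have hS : (CFC.sqrt σ)ᴴ = CFC.sqrt σ := (CFC.sqrt_nonneg σ).isSelfAdjoint
  have hA' : Aᴴ = A := hA.isSelfAdjoint
  rw [conjTranspose_mul, hS, hA', Matrix.mul_assoc, ← Matrix.mul_assoc A,
    hA.isIdempotentElem, trace_mul_comm, Matrix.mul_assoc, CFC.sqrt_mul_sqrt_self σ hσ]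

lemma re_trace_proj_mul_nonneg (hA : IsStarProjection A) (hσ : 0 ≤ σ) :
    0 ≤ (A * σ).trace.re := by
  rw [← trace_conjTranspose_mul_self_proj_mul_sqrt hA hσ]
  exact (Complex.nonneg_iff.mp (posSemidef_conjTranspose_mul_self _).trace_nonneg).1

lemma hsNorm_proj_mul_sqrt (hA : IsStarProjection A) (hσ : 0 ≤ σ) :
    hsNorm (A * CFC.sqrt σ) = √(A * σ).trace.re := by
  rw [hsNorm, trace_conjTranspose_mul_self_proj_mul_sqrt hA hσ]

lemma norm_trace_unitary_mul_proj_mul_proj_le {U B : Matrix (Fin d) (Fin d) ℂ}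
    (hU : U ∈ unitary _) (hA : IsStarProjection A) (hB : IsStarProjection B) (hσ : 0 ≤ σ) :
    ‖(U * (A * σ * B)).trace‖ ≤ √(A * σ).trace.re * √(B * σ).trace.re := by
  set S := CFC.sqrt σ with hSdef
  have hS : Sᴴ = S := (CFC.sqrt_nonneg σ).isSelfAdjoint
  have hB' : Bᴴ = B := hB.isSelfAdjoint
  have hcyc : (U * (A * σ * B)).trace = ((B * S)ᴴ * (U * (A * S))).trace := by
    rw [conjTranspose_mul, hS, hB', trace_mul_comm (S * B), ← CFC.sqrt_mul_sqrt_self σ hσ, ← hSdef]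
    simp only [Matrix.mul_assoc]
  rw [hcyc, mul_comm]
  calc _ ≤ hsNorm (B * S) * hsNorm (U * (A * S)) := norm_trace_conjTranspose_mul_le _ _
    _ = _ := by rw [hsNorm_unitary_mul hU, hsNorm_proj_mul_sqrt hA hσ, hsNorm_proj_mul_sqrt hB hσ]

end Compression

lemma re_trace_mul_add_re_trace_one_sub_mul (P σ : Matrix (Fin d) (Fin d) ℂ) :
    (P * σ).trace.re + ((1 - P) * σ).trace.re = σ.trace.re := by
  rw [← Complex.add_re, ← trace_add, ← Matrix.add_mul, add_sub_cancel, Matrix.one_mul]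

theorem trNorm_inv_smul_compression_sub_le {P σ : Matrix (Fin d) (Fin d) ℂ}
    (hP : IsStarProjection P) (hσ : IsDensity σ) (hq : 0 < ((1 - P) * σ).trace.re) :
    trNorm (((1 - P) * σ).trace.re⁻¹ • ((1 - P) * σ * (1 - P)) - σ) ≤
      2 * ((P * σ).trace.re + √(P * σ).trace.re * √((1 - P) * σ).trace.re) := by
  obtain ⟨hσ0, hσ1⟩ := hσ
  replace hσ0 : 0 ≤ σ := hσ0.nonneg
  set Q := 1 - P with hQ
  have hQ' : IsStarProjection Q := hP.one_sub
  set p := (P * σ).trace.re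
  set q := (Q * σ).trace.re
  have hp := re_trace_proj_mul_nonneg hP hσ0
  have hpq : p + q = 1 := by
    simpa [hσ1] using re_trace_mul_add_re_trace_one_sub_mul P σ
  have hΔ : (q⁻¹ • (Q * σ * Q) - σ).IsHermitian :=
    ((IsSelfAdjoint.all q⁻¹).smul (hσ0.isSelfAdjoint.conjugate_self hQ'.isSelfAdjoint)).sub
      hσ0.isSelfAdjoint
  have hblocks : q⁻¹ • (Q * σ * Q) - σ =
      (q⁻¹ - 1) • (Q * σ * Q) - Q * σ * P - P * σ * Q - P * σ * P := by
    have hσ_blocks : σ = Q * σ * Q + Q * σ * P + P * σ * Q + P * σ * P := by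
      simp only [hQ, Matrix.mul_sub, Matrix.sub_mul, Matrix.one_mul, Matrix.mul_one]
      abel
    rw [sub_smul, one_smul]
    nth_rw 2 [hσ_blocks]
    abel
  obtain ⟨U, hU, hUΔ⟩ := exists_unitary_trNorm_eq hΔ
  have block {A B} (hA : IsStarProjection A) (hB : IsStarProjection B) :=
    abs_le.mp ((Complex.abs_re_le_norm _).trans
      (norm_trace_unitary_mul_proj_mul_proj_le hU hA hB hσ0))
  have hQQ := (block hQ' hQ').2
  have hQP := (block hQ' hP).1
  have hPQ := (block hP hQ').1
  have hPP := (block hP hP).1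
  rw [Real.mul_self_sqrt (by linarith)] at hQQ
  rw [Real.mul_self_sqrt hp] at hPP
  have hcoef : 0 ≤ q⁻¹ - 1 := sub_nonneg.mpr (one_le_inv₀ hq |>.mpr (by linarith))
  have hfirst : (q⁻¹ - 1) * (U * (Q * σ * Q)).trace.re ≤ p := by
    calc _ ≤ (q⁻¹ - 1) * q := mul_le_mul_of_nonneg_left hQQ hcoef
      _ = p := by rw [sub_mul, inv_mul_cancel₀ hq.ne']; linarith
  rw [hUΔ, hblocks]
  simp only [Matrix.mul_sub, Matrix.mul_smul, trace_sub, trace_smul, Complex.sub_re,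
    Complex.smul_re, smul_eq_mul]
  linarith

/-- the normalized restriction of σ to V^⊥ stays trace-norm close to σ. -/
theorem sigma_perp_trNorm_bound (P σ : Matrix (Fin d) (Fin d) ℂ)
    (hP : P.IsHermitian) (hP2 : P * P = P) (hσ : IsDensity σ)
    (ε : ℝ) (hε : ε ∈ Set.Ioo (0 : ℝ) 1) (htr : (σ * P).trace.re ≤ 1 - ε) :
    trNorm ((((1 : Matrix (Fin d) (Fin d) ℂ) - P) * σ).trace.re⁻¹ •
        ((1 - P) * σ * (1 - P)) - σ) ≤
      2 * ((P * σ).trace.re +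
        Real.sqrt ((P * σ).trace.re) * Real.sqrt (((1 - P) * σ).trace.re)) ∧
    2 * ((P * σ).trace.re +
        Real.sqrt ((P * σ).trace.re) * Real.sqrt (((1 - P) * σ).trace.re)) ≤
      2 * (1 - ε + Real.sqrt (1 - ε)) := by
  have hP' : IsStarProjection P := ⟨hP2, hP⟩
  have hp := re_trace_proj_mul_nonneg hP' hσ.1.nonneg
  have hpq := re_trace_mul_add_re_trace_one_sub_mul P σ
  rw [hσ.2, Complex.one_re] at hpq
  have hpε : (P * σ).trace.re ≤ 1 - ε := by rwa [trace_mul_comm]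
  refine ⟨trNorm_inv_smul_compression_sub_le hP' hσ (by linarith [hε.1]), ?_⟩
  calc _ ≤ 2 * (1 - ε + Real.sqrt (1 - ε) * 1) := by
        gcongr
        exact Real.sqrt_le_one.mpr (by linarith)
    _ = _ := by rw [mul_one]

end QSVQDH
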